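/- arXiv:0910.1536 — 9 statements merged into one kernel-verified Lean document; each statement's English description precedes it below -/
import Mathlib

section
/- Let A be a finite-dimensional commutative unital C*-algebra, ω a state on A, and S₁, S₂ ⊆ A. For a subset S let A(S) denote the unital star-subalgebra of A generated by S, and let ω₁, ω₂ denote the restrictions of ω to A(S₁), A(S₂). Then the following are equivalent: (i) S₁ and S₂ are ω-independent, i.e. ω(uv) = ω(u)ω(v) for all u ∈ A(S₁) and v ∈ A(S₂); (ii) there exist states ω₁' on A(S₁) and ω₂' on A(S₂) such that the multiplication map m : A(S₁) ⊗_ℂ A(S₂) → A, determined by m(u ⊗ v) = uv, is an algebra homomorphism whose image is A(S₁ ∪ S₂) and which satisfies ω(m(z)) = (ω₁' ⊗ ω₂')(z) for every z ∈ A(S₁) ⊗_ℂ A(S₂), where (ω₁' ⊗ ω₂')(u ⊗ v) = ω₁'(u)ω₂'(v); moreover in (ii) one may take ω₁' = ω₁ and ω₂' = ω₂. -/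
open scoped ComplexOrder TensorProduct

def IsStateOn {B : Type*} [Ring B] [StarRing B] [Algebra ℂ B] (ω : B →ₗ[ℂ] ℂ) : Prop :=
  ω 1 = 1 ∧ ∀ b : B, 0 ≤ ω (star b * b)

noncomputable def mulTensorMap {A : Type*} [CommCStarAlgebra A] (S₁ S₂ : Set A) :
    (StarAlgebra.adjoin ℂ S₁) ⊗[ℂ] (StarAlgebra.adjoin ℂ S₂) →ₐ[ℂ] A :=
  Algebra.TensorProduct.productMap (StarAlgebra.adjoin ℂ S₁).subtype.toAlgHom
    (StarAlgebra.adjoin ℂ S₂).subtype.toAlgHom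

noncomputable def tensorFunctional {B₁ B₂ : Type*} [Ring B₁] [Ring B₂] [Algebra ℂ B₁]
    [Algebra ℂ B₂] (ω₁ : B₁ →ₗ[ℂ] ℂ) (ω₂ : B₂ →ₗ[ℂ] ℂ) : B₁ ⊗[ℂ] B₂ →ₗ[ℂ] ℂ :=
  (LinearMap.mul' ℂ ℂ).comp (TensorProduct.map ω₁ ω₂)

lemma StarSubalgebra.range_subtype_toAlgHom {R B : Type*} [CommSemiring R] [StarRing R]
    [Semiring B] [StarRing B] [Algebra R B] [StarModule R B] (S : StarSubalgebra R B) :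
    S.subtype.toAlgHom.range = S.toSubalgebra :=
  S.toSubalgebra.range_val

@[simp]
lemma tensorFunctional_tmul {B₁ B₂ : Type*} [Ring B₁] [Ring B₂] [Algebra ℂ B₁] [Algebra ℂ B₂]
    (ω₁ : B₁ →ₗ[ℂ] ℂ) (ω₂ : B₂ →ₗ[ℂ] ℂ) (u : B₁) (v : B₂) :
    tensorFunctional ω₁ ω₂ (u ⊗ₜ v) = ω₁ u * ω₂ v := rfl

lemma IsStateOn.comp_starAlgHom {B C : Type*} [Ring B] [StarRing B] [Algebra ℂ B] [Ring C]
    [StarRing C] [Algebra ℂ C] {ω : C →ₗ[ℂ] ℂ} (hω : IsStateOn ω) (φ : B →⋆ₐ[ℂ] C) :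
    IsStateOn (ω.comp φ.toAlgHom.toLinearMap) :=
  ⟨by simpa using hω.1, fun b => by simpa [map_star] using hω.2 (φ b)⟩

section

variable {A : Type*} [CommCStarAlgebra A]

@[simp]
lemma mulTensorMap_tmul (S₁ S₂ : Set A) (u : StarAlgebra.adjoin ℂ S₁)
    (v : StarAlgebra.adjoin ℂ S₂) : mulTensorMap S₁ S₂ (u ⊗ₜ v) = u * v :=
  Algebra.TensorProduct.productMap_apply_tmul _ _ u v

lemma mulTensorMap_range (S₁ S₂ : Set A) :
    (mulTensorMap S₁ S₂).range = (StarAlgebra.adjoin ℂ (S₁ ∪ S₂)).toSubalgebra := by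
  rw [mulTensorMap, Algebra.TensorProduct.productMap_range,
    StarSubalgebra.range_subtype_toAlgHom, StarSubalgebra.range_subtype_toAlgHom,
    StarAlgebra.adjoin_toSubalgebra, StarAlgebra.adjoin_toSubalgebra,
    StarAlgebra.adjoin_toSubalgebra, ← Algebra.adjoin_union, Set.union_star,
    Set.union_union_union_comm]

lemma comp_mulTensorMap_eq_tensorFunctional_iff {S₁ S₂ : Set A} (ω : A →ₗ[ℂ] ℂ)
    (ω₁ : StarAlgebra.adjoin ℂ S₁ →ₗ[ℂ] ℂ) (ω₂ : StarAlgebra.adjoin ℂ S₂ →ₗ[ℂ] ℂ) :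
    (∀ z, ω (mulTensorMap S₁ S₂ z) = tensorFunctional ω₁ ω₂ z) ↔
      ∀ (u : StarAlgebra.adjoin ℂ S₁) (v : StarAlgebra.adjoin ℂ S₂),
        ω (u * v) = ω₁ u * ω₂ v := by
  refine ⟨fun h u v => by simpa using h (u ⊗ₜ v), fun h z => ?_⟩
  have hext : ω.comp (mulTensorMap S₁ S₂).toLinearMap = tensorFunctional ω₁ ω₂ :=
    TensorProduct.ext' fun u v => by simpa using h u v
  exact LinearMap.congr_fun hext z

lemma comp_mulTensorMap_eq_tensorFunctional_restrict {S₁ S₂ : Set A} {ω : A →ₗ[ℂ] ℂ}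
    (h : ∀ u ∈ StarAlgebra.adjoin ℂ S₁, ∀ v ∈ StarAlgebra.adjoin ℂ S₂, ω (u * v) = ω u * ω v)
    (z : StarAlgebra.adjoin ℂ S₁ ⊗[ℂ] StarAlgebra.adjoin ℂ S₂) :
    ω (mulTensorMap S₁ S₂ z) =
      tensorFunctional (ω.comp (StarAlgebra.adjoin ℂ S₁).subtype.toAlgHom.toLinearMap)
        (ω.comp (StarAlgebra.adjoin ℂ S₂).subtype.toAlgHom.toLinearMap) z :=
  (comp_mulTensorMap_eq_tensorFunctional_iff ω _ _).2 (fun u v => h u u.2 v v.2) z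

end

theorem independent_iff_tensor_cover_general (A : Type*) [CommCStarAlgebra A]
    (ω : A →ₗ[ℂ] ℂ) (hω : IsStateOn ω) (S₁ S₂ : Set A) :
    ((∀ u ∈ StarAlgebra.adjoin ℂ S₁, ∀ v ∈ StarAlgebra.adjoin ℂ S₂,
        ω (u * v) = ω u * ω v) ↔
      (∃ (ω₁' : (StarAlgebra.adjoin ℂ S₁ : StarSubalgebra ℂ A) →ₗ[ℂ] ℂ)
         (ω₂' : (StarAlgebra.adjoin ℂ S₂ : StarSubalgebra ℂ A) →ₗ[ℂ] ℂ),
        IsStateOn ω₁' ∧ IsStateOn ω₂' ∧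
        (mulTensorMap S₁ S₂).range = (StarAlgebra.adjoin ℂ (S₁ ∪ S₂)).toSubalgebra ∧
        ∀ z, ω (mulTensorMap S₁ S₂ z) = tensorFunctional ω₁' ω₂' z)) ∧
    ((∀ u ∈ StarAlgebra.adjoin ℂ S₁, ∀ v ∈ StarAlgebra.adjoin ℂ S₂,
        ω (u * v) = ω u * ω v) →
      ((mulTensorMap S₁ S₂).range = (StarAlgebra.adjoin ℂ (S₁ ∪ S₂)).toSubalgebra ∧
        ∀ z, ω (mulTensorMap S₁ S₂ z) =
          tensorFunctional (ω.comp (StarAlgebra.adjoin ℂ S₁).subtype.toAlgHom.toLinearMap)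
            (ω.comp (StarAlgebra.adjoin ℂ S₂).subtype.toAlgHom.toLinearMap) z)) := by
  refine ⟨⟨fun h => ⟨_, _, hω.comp_starAlgHom _, hω.comp_starAlgHom _,
      mulTensorMap_range S₁ S₂, comp_mulTensorMap_eq_tensorFunctional_restrict h⟩, ?_⟩,
    fun h => ⟨mulTensorMap_range S₁ S₂, comp_mulTensorMap_eq_tensorFunctional_restrict h⟩⟩
  rintro ⟨ω₁', ω₂', h₁, h₂, -, hz⟩ u hu v hv
  have hmul := (comp_mulTensorMap_eq_tensorFunctional_iff ω ω₁' ω₂').1 hz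
  -- Testing on `u ⊗ 1` and `1 ⊗ v`, normalization forces `ω₁'`, `ω₂'` to restrict `ω`.
  have hωu : ω u = ω₁' ⟨u, hu⟩ := by simpa [h₂.1] using hmul ⟨u, hu⟩ 1
  have hωv : ω v = ω₂' ⟨v, hv⟩ := by simpa [h₁.1] using hmul 1 ⟨v, hv⟩
  rw [hωu, hωv]
  exact hmul ⟨u, hu⟩ ⟨v, hv⟩

/-- **Independence is equivalent to a tensor-product cover.**
Let `A` be a finite-dimensional commutative unital C*-algebra, `ω` a state on `A`,
and `S₁, S₂ ⊆ A`.  The following are equivalent: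
(i) `S₁` and `S₂` are `ω`-independent, i.e. `ω (u * v) = ω u * ω v` for all
`u ∈ A(S₁)`, `v ∈ A(S₂)` (the generated unital star-subalgebras);
(ii) there are states `ω₁'` on `A(S₁)` and `ω₂'` on `A(S₂)` such that the
multiplication algebra homomorphism `m : A(S₁) ⊗[ℂ] A(S₂) →ₐ A` has image
`A(S₁ ∪ S₂)` and satisfies `ω ∘ m = ω₁' ⊗ ω₂'`.
Moreover, in (ii) one may take `ω₁'`, `ω₂'` to be the restrictions of `ω`. -/
theorem independent_iff_tensor_cover (A : Type*) [CommCStarAlgebra A] [FiniteDimensional ℂ A]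
    (ω : A →ₗ[ℂ] ℂ) (hω : IsStateOn ω) (S₁ S₂ : Set A) :
    ((∀ u ∈ StarAlgebra.adjoin ℂ S₁, ∀ v ∈ StarAlgebra.adjoin ℂ S₂,
        ω (u * v) = ω u * ω v) ↔
      (∃ (ω₁' : (StarAlgebra.adjoin ℂ S₁ : StarSubalgebra ℂ A) →ₗ[ℂ] ℂ)
         (ω₂' : (StarAlgebra.adjoin ℂ S₂ : StarSubalgebra ℂ A) →ₗ[ℂ] ℂ),
        IsStateOn ω₁' ∧ IsStateOn ω₂' ∧
        (mulTensorMap S₁ S₂).range = (StarAlgebra.adjoin ℂ (S₁ ∪ S₂)).toSubalgebra ∧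
        ∀ z, ω (mulTensorMap S₁ S₂ z) = tensorFunctional ω₁' ω₂' z)) ∧
    ((∀ u ∈ StarAlgebra.adjoin ℂ S₁, ∀ v ∈ StarAlgebra.adjoin ℂ S₂,
        ω (u * v) = ω u * ω v) →
      ((mulTensorMap S₁ S₂).range = (StarAlgebra.adjoin ℂ (S₁ ∪ S₂)).toSubalgebra ∧
        ∀ z, ω (mulTensorMap S₁ S₂ z) =
          tensorFunctional (ω.comp (StarAlgebra.adjoin ℂ S₁).subtype.toAlgHom.toLinearMap)
            (ω.comp (StarAlgebra.adjoin ℂ S₂).subtype.toAlgHom.toLinearMap) z)) :=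
  independent_iff_tensor_cover_general A ω hω S₁ S₂
end

section
/- (Algebraic Chebyshev inequality.) Let A be a commutative unital C*-algebra and ω a state on A, and let ε > 0. (i) If y ∈ A with y ≥ 0, then every element e of the closed ideal of A generated by (y − ε·1)₊ satisfying 0 ≤ e ≤ 1 obeys ε·ω(e) ≤ ω(y). (ii) If x ∈ A is self-adjoint and μ = ω(x) (a real number), then every element e of the closed ideal of A generated by ((x − μ·1)² − ε²·1)₊ satisfying 0 ≤ e ≤ 1 obeys ε²·ω(e) ≤ ω((x − μ·1)²). -/
/-!
Write `a = y - ε • 1`. Since `a⁻ * a⁺ = 0` and `A` is commutative, `a⁻` annihilates the closed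
ideal generated by `a⁺`, so for `e` in that ideal `e * a = e * a⁺ ≥ 0`. Then
`y - ε • e = e * a + (1 - e) * y` is a sum of products of commuting positive elements, hence
`ε • e ≤ y`, and applying the positive functional `ω` gives (i). Part (ii) is (i) applied to
`y = (x - ω x • 1) ^ 2`, which is positive because `ω x` is real.
-/

open scoped ComplexOrder

section CommCStarAlgebra

variable {A : Type*} [CommCStarAlgebra A]

lemma negPart_mul_eq_zero_of_mem_closure_span_posPart {a e : A}
    (he : e ∈ closure (Ideal.span {a⁺} : Set A)) : a⁻ * e = 0 := by
  have hclosed : IsClosed {z : A | a⁻ * z = 0} :=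
    isClosed_singleton.preimage (continuous_const_mul a⁻)
  refine closure_minimal (fun z hz => ?_) hclosed he
  obtain ⟨c, rfl⟩ := Ideal.mem_span_singleton'.mp hz
  change a⁻ * (c * a⁺) = 0
  rw [mul_left_comm, CFC.negPart_mul_posPart, mul_zero]

variable [PartialOrder A] [StarOrderedRing A]

lemma mul_nonneg_of_mem_closure_span_posPart {a e : A} (ha : IsSelfAdjoint a)
    (he : e ∈ closure (Ideal.span {a⁺} : Set A)) (he0 : 0 ≤ e) : 0 ≤ e * a := by
  have hea : e * a = e * a⁺ := by
    nth_rw 1 [← CFC.posPart_sub_negPart a ha]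
    rw [mul_sub, mul_comm e a⁻, negPart_mul_eq_zero_of_mem_closure_span_posPart he, sub_zero]
  rw [hea]
  exact (Commute.all e a⁺).mul_nonneg he0 (CFC.posPart_nonneg a)

lemma smul_le_of_mem_closure_span_posPart_sub_smul_one {y e : A} {ε : ℝ} (hy : 0 ≤ y)
    (he : e ∈ closure (Ideal.span {(y - ε • 1)⁺} : Set A)) (he0 : 0 ≤ e) (he1 : e ≤ 1) :
    ε • e ≤ y := by
  have hsa : IsSelfAdjoint (y - ε • 1) :=
    hy.isSelfAdjoint.sub ((IsSelfAdjoint.all ε).smul (IsSelfAdjoint.one A))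
  have hsplit : y - ε • e = e * (y - ε • 1) + (1 - e) * y := by
    rw [mul_sub, sub_mul, mul_smul_comm, mul_one, one_mul]
    abel
  rw [← sub_nonneg, hsplit]
  exact add_nonneg (mul_nonneg_of_mem_closure_span_posPart hsa he he0)
    ((Commute.all (1 - e) y).mul_nonneg (sub_nonneg.mpr he1) hy)

lemma PositiveLinearMap.ofReal_mul_le_of_mem_closure_span_posPart_sub_smul_one
    (ω : A →ₚ[ℂ] ℂ) {y e : A} {ε : ℝ} (hy : 0 ≤ y)
    (he : e ∈ closure (Ideal.span {(y - ε • 1)⁺} : Set A)) (he0 : 0 ≤ e) (he1 : e ≤ 1) :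
    (ε : ℂ) * ω e ≤ ω y := by
  have h := OrderHomClass.mono ω (smul_le_of_mem_closure_span_posPart_sub_smul_one hy he he0 he1)
  rwa [map_smul_of_tower, Complex.real_smul] at h

end CommCStarAlgebra

theorem chebyshev_inequality_general (A : Type*) [CommCStarAlgebra A]
    [PartialOrder A] [StarOrderedRing A]
    (ω : A →ₗ[ℂ] ℂ) (hωpos : ∀ a : A, 0 ≤ a → 0 ≤ ω a)
    (ε : ℝ) :
    (∀ y : A, 0 ≤ y →
      ∀ e ∈ closure (Ideal.span {(y - ε • 1)⁺} : Set A), 0 ≤ e → e ≤ 1 →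
        (ε : ℂ) * ω e ≤ ω y) ∧
    (∀ x : A, IsSelfAdjoint x →
      ∀ e ∈ closure (Ideal.span {((x - ω x • 1) ^ 2 - (ε ^ 2 : ℝ) • 1)⁺} : Set A),
        0 ≤ e → e ≤ 1 → (ε ^ 2 : ℂ) * ω e ≤ ω ((x - ω x • 1) ^ 2)) := by
  let φ : A →ₚ[ℂ] ℂ := PositiveLinearMap.mk₀ ω hωpos
  refine ⟨fun y hy e he he0 he1 =>
    φ.ofReal_mul_le_of_mem_closure_span_posPart_sub_smul_one hy he he0 he1, ?_⟩
  intro x hx e he he0 he1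
  have hmean : IsSelfAdjoint (ω x) := hx.map' φ
  have hvar : 0 ≤ (x - ω x • 1) ^ 2 := (hx.sub (hmean.smul (IsSelfAdjoint.one A))).sq_nonneg
  exact_mod_cast φ.ofReal_mul_le_of_mem_closure_span_posPart_sub_smul_one hvar he he0 he1

/-- **Algebraic Chebyshev inequality.**
Let `A` be a commutative unital C*-algebra, `ω` a state on `A`, and `ε > 0`.
(i) For `0 ≤ y`, every `e` in the closed ideal generated by `(y - ε•1)⁺`
with `0 ≤ e ≤ 1` satisfies `ε • ω e ≤ ω y`.
(ii) For self-adjoint `x` with mean `μ = ω x`, every `e` in the closed ideal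
generated by `((x - μ•1)² - ε²•1)⁺` with `0 ≤ e ≤ 1` satisfies
`ε² • ω e ≤ ω ((x - μ•1)²)`. -/
theorem chebyshev_inequality (A : Type*) [CommCStarAlgebra A]
    [PartialOrder A] [StarOrderedRing A]
    (ω : A →ₗ[ℂ] ℂ) (hω1 : ω 1 = 1) (hωpos : ∀ a : A, 0 ≤ a → 0 ≤ ω a)
    (ε : ℝ) (hε : 0 < ε) :
    (∀ y : A, 0 ≤ y →
      ∀ e ∈ closure (Ideal.span {(y - ε • 1)⁺} : Set A), 0 ≤ e → e ≤ 1 →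
        (ε : ℂ) * ω e ≤ ω y) ∧
    (∀ x : A, IsSelfAdjoint x →
      ∀ e ∈ closure (Ideal.span {((x - ω x • 1) ^ 2 - (ε ^ 2 : ℝ) • 1)⁺} : Set A),
        0 ≤ e → e ≤ 1 → (ε ^ 2 : ℂ) * ω e ≤ ω ((x - ω x • 1) ^ 2)) :=
  chebyshev_inequality_general A ω hωpos ε
end

section
/- (Weak law of large numbers.) Let A be a commutative unital C*-algebra, ω a state on A, and x₁, x₂, … a sequence of self-adjoint elements of A that are ω-independent, meaning that for distinct indices i₁ < i₂ < … < i_m and positive integers k₁, …, k_m one has ω(x_{i₁}^{k₁} x_{i₂}^{k₂} ⋯ x_{i_m}^{k_m}) = ω(x_{i₁}^{k₁})·ω(x_{i₂}^{k₂})⋯ω(x_{i_m}^{k_m}), and identically distributed, meaning ω(xᵢ^k) = ω(x₁^k) for all i and all positive integers k. Let μ = ω(x₁) and sₙ = (x₁ + ⋯ + xₙ)/n. Then for every positive integer k, ω(|sₙ − μ·1|^k) → 0 as n → ∞. -/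
/-!
Centre the variables: `yᵢ = xᵢ - μ • 1` are again independent and identically distributed, and
now `ω (yᵢ) = 0`. Expanding `ω ((y₀ + ⋯ + y_{n-1}) ^ 2k)` as a sum over words
`g : Fin 2k → range n`, independence factors each term over the letters of `g`, and a letter
occurring exactly once kills the term. So only words with at most `k` distinct letters
contribute; there are `O(n ^ k)` of them, and the `2k`-th moment of the centred mean
`sₙ - μ • 1` is `O(n ^ (-k))`. Cauchy–Schwarz for the positive functional `ω` (its GNS inner
product) gives `|ω (|a| ^ k)| ^ 2 ≤ ω (a ^ 2k)`.
-/
open scoped ComplexOrder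
open Finset Filter Topology Asymptotics

theorem Finset.prod_orderEmbOfFin {α M : Type*} [LinearOrder α] [CommMonoid M]
    (t : Finset α) (f : α → M) :
    ∏ j, f (t.orderEmbOfFin rfl j) = ∏ i ∈ t, f i := by
  rw [← prod_coe_sort t f]
  exact Fintype.prod_equiv (t.orderIsoOfFin rfl).toEquiv _ _ fun j => by
    simp [coe_orderIsoOfFin_apply]

theorem Finset.card_filter_card_image_le {ι α : Type*} [Fintype ι] [DecidableEq ι]
    [DecidableEq α] (s : Finset α) {j : ℕ} (hj : j ≤ #s) :
    #{g ∈ Fintype.piFinset fun _ : ι => s | #(univ.image g) ≤ j}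
      ≤ (#s).choose j * j ^ Fintype.card ι := by
  calc _ ≤ #((s.powersetCard j).biUnion fun t => Fintype.piFinset fun _ : ι => t) := by
        refine card_le_card fun g hg => ?_
        obtain ⟨hgs, hgj⟩ := mem_filter.1 hg
        have himage : univ.image g ⊆ s := by
          simpa [image_subset_iff] using hgs
        obtain ⟨t, hgt, hts, rfl⟩ := exists_subsuperset_card_eq himage hgj hj
        exact mem_biUnion.2 ⟨t, mem_powersetCard.2 ⟨hts, rfl⟩,
          Fintype.mem_piFinset.2 fun i => hgt (mem_image_of_mem g (mem_univ i))⟩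
    _ ≤ ∑ t ∈ s.powersetCard j, #(Fintype.piFinset fun _ : ι => t) := card_biUnion_le
    _ = (#s).choose j * j ^ Fintype.card ι := by
        simp only [Fintype.card_piFinset, prod_const, card_univ]
        rw [sum_congr rfl fun t ht => by rw [(mem_powersetCard.1 ht).2], sum_const,
          card_powersetCard, smul_eq_mul]

section Polynomial

open Polynomial

variable {𝕜 A : Type*} [CommRing 𝕜] [CommRing A] [Algebra 𝕜 A] (ω : A →ₗ[𝕜] 𝕜) {x : ℕ → A}

theorem map_aeval_eq_map_aeval_zero (hid : ∀ i, ∀ k : ℕ, 0 < k → ω (x i ^ k) = ω (x 0 ^ k))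
    (i : ℕ) (p : 𝕜[X]) :
    ω (aeval (x i) p) = ω (aeval (x 0) p) := by
  simp_rw [aeval_eq_sum_range, map_sum, map_smul]
  refine sum_congr rfl fun c _ => ?_
  rcases c.eq_zero_or_pos with rfl | hc
  · simp
  · rw [hid i c hc]

theorem map_sub_smul_one_pow_eq (hid : ∀ i, ∀ k : ℕ, 0 < k → ω (x i ^ k) = ω (x 0 ^ k))
    (c : 𝕜) (i m : ℕ) :
    ω ((x i - c • 1) ^ m) = ω ((x 0 - c • 1) ^ m) := by
  have h := map_aeval_eq_map_aeval_zero ω hid i ((X - C c : 𝕜[X]) ^ m)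
  simp only [_root_.map_pow, _root_.map_sub, aeval_X, aeval_C, Algebra.algebraMap_eq_smul_one] at h
  exact h

variable (hω1 : ω 1 = 1)
  (hindep : ∀ (m : ℕ) (idx : Fin m → ℕ), StrictMono idx →
    ∀ k : Fin m → ℕ, (∀ j, 0 < k j) →
      ω (∏ j, x (idx j) ^ k j) = ∏ j, ω (x (idx j) ^ k j))
include hω1 hindep

theorem map_prod_pow_of_strictMono {m : ℕ} {idx : Fin m → ℕ} (hidx : StrictMono idx)
    (k : Fin m → ℕ) :
    ω (∏ j, x (idx j) ^ k j) = ∏ j, ω (x (idx j) ^ k j) := by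
  classical
  set s : Finset (Fin m) := {j | k j ≠ 0}
  have hs : ∀ j, 0 < k (s.orderEmbOfFin rfl j) := fun j =>
    Nat.pos_of_ne_zero (mem_filter.1 (s.orderEmbOfFin_mem rfl j)).2
  have hA : ∏ j ∈ s, x (idx j) ^ k j = ∏ j, x (idx j) ^ k j :=
    prod_filter_of_ne fun j _ h => by contrapose! h; simp [h]
  have hK : ∏ j ∈ s, ω (x (idx j) ^ k j) = ∏ j, ω (x (idx j) ^ k j) :=
    prod_filter_of_ne fun j _ h => by contrapose! h; simp [h, hω1]
  rw [← hA, ← hK, ← prod_orderEmbOfFin s, ← prod_orderEmbOfFin s]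
  exact hindep _ _ (hidx.comp (s.orderEmbOfFin rfl).strictMono) _ hs

theorem map_prod_aeval_of_strictMono {m : ℕ} {idx : Fin m → ℕ} (hidx : StrictMono idx)
    (p : Fin m → 𝕜[X]) :
    ω (∏ j, aeval (x (idx j)) (p j)) = ∏ j, ω (aeval (x (idx j)) (p j)) := by
  have hD : ∀ j, (p j).natDegree < univ.sup (fun j => (p j).natDegree) + 1 := fun j =>
    Nat.lt_succ_of_le (le_sup (f := fun j => (p j).natDegree) (mem_univ j))
  simp_rw [aeval_eq_sum_range' (hD _), map_sum, map_smul, smul_eq_mul, prod_univ_sum, prod_smul,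
    map_sum, map_smul, smul_eq_mul, map_prod_pow_of_strictMono ω hω1 hindep hidx, prod_mul_distrib]

theorem map_prod_aeval (t : Finset ℕ) (p : ℕ → 𝕜[X]) :
    ω (∏ i ∈ t, aeval (x i) (p i)) = ∏ i ∈ t, ω (aeval (x i) (p i)) := by
  rw [← prod_orderEmbOfFin t, ← prod_orderEmbOfFin t]
  exact map_prod_aeval_of_strictMono ω hω1 hindep (t.orderEmbOfFin rfl).strictMono _

theorem map_prod_sub_smul_one_pow (c : 𝕜) (t : Finset ℕ) (K : ℕ → ℕ) :
    ω (∏ i ∈ t, (x i - c • 1) ^ K i) = ∏ i ∈ t, ω ((x i - c • 1) ^ K i) := by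
  have h := map_prod_aeval ω hω1 hindep t fun i => (X - C c : 𝕜[X]) ^ K i
  simp only [_root_.map_pow, _root_.map_sub, aeval_X, aeval_C, Algebra.algebraMap_eq_smul_one] at h
  exact h

end Polynomial

section Moments

variable {𝕜 A : Type*} [RCLike 𝕜] [CommRing A] [Algebra 𝕜 A] (φ : A →ₗ[𝕜] 𝕜) {y : ℕ → A}
  (hindep : ∀ (t : Finset ℕ) (K : ℕ → ℕ), φ (∏ i ∈ t, y i ^ K i) = ∏ i ∈ t, φ (y i ^ K i))
  (hident : ∀ i m, φ (y i ^ m) = φ (y 0 ^ m))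
include hindep hident

theorem map_prod_comp_eq_prod_map_pow_card_fiber {N : ℕ} (g : Fin N → ℕ) :
    φ (∏ j, y (g j)) = ∏ i ∈ univ.image g, φ (y 0 ^ #{j | g j = i}) := by
  rw [Finset.prod_comp, hindep]
  exact prod_congr rfl fun i _ => hident _ _

theorem two_mul_card_image_le_of_map_prod_ne_zero (hmean : φ (y 0) = 0) {N : ℕ}
    {g : Fin N → ℕ} (hg : φ (∏ j, y (g j)) ≠ 0) :
    2 * #(univ.image g) ≤ N := by
  rw [map_prod_comp_eq_prod_map_pow_card_fiber φ hindep hident] at hg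
  have hfiber : ∀ i ∈ univ.image g, 2 ≤ #{j | g j = i} := by
    intro i hi
    obtain ⟨j, -, rfl⟩ := mem_image.1 hi
    have hpos : 0 < #{j' | g j' = g j} := card_pos.2 ⟨j, by simp⟩
    have hne : #{j' | g j' = g j} ≠ 1 := fun h1 =>
      prod_ne_zero_iff.1 hg _ hi (by rw [h1, pow_one, hmean])
    omega
  calc 2 * #(univ.image g) = ∑ _i ∈ univ.image g, 2 := by rw [sum_const, smul_eq_mul, mul_comm]
    _ ≤ ∑ i ∈ univ.image g, #{j | g j = i} := sum_le_sum hfiber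
    _ = N := by rw [← card_eq_sum_card_image, card_univ, Fintype.card_fin]

theorem norm_map_prod_comp_le {N : ℕ} {B : ℝ} (hB1 : 1 ≤ B) (hB : ∀ m ≤ N, ‖φ (y 0 ^ m)‖ ≤ B)
    (g : Fin N → ℕ) :
    ‖φ (∏ j, y (g j))‖ ≤ B ^ N := by
  rw [map_prod_comp_eq_prod_map_pow_card_fiber φ hindep hident, norm_prod]
  calc ∏ i ∈ univ.image g, ‖φ (y 0 ^ #{j | g j = i})‖ ≤ ∏ _i ∈ univ.image g, B :=
        prod_le_prod (fun _ _ => norm_nonneg _) fun i _ =>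
          hB _ ((card_filter_le _ _).trans (by simp))
    _ = B ^ #(univ.image g) := prod_const B
    _ ≤ B ^ N := pow_le_pow_right₀ hB1 (card_image_le.trans (by simp))

theorem norm_map_sum_pow_le (hmean : φ (y 0) = 0) {N n : ℕ} (hn : N / 2 ≤ n) {B : ℝ}
    (hB1 : 1 ≤ B) (hB : ∀ m ≤ N, ‖φ (y 0 ^ m)‖ ≤ B) :
    ‖φ ((∑ i ∈ range n, y i) ^ N)‖ ≤ (N * B) ^ N * n ^ (N / 2) := by
  set S := {g ∈ Fintype.piFinset fun _ : Fin N => range n | #(univ.image g) ≤ N / 2}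
  have hS : #S ≤ N ^ N * n ^ (N / 2) := by
    have h := card_filter_card_image_le (ι := Fin N) (range n) (j := N / 2) (by simpa using hn)
    rw [card_range, Fintype.card_fin] at h
    refine h.trans ?_
    rw [mul_comm]
    gcongr
    · exact Nat.div_le_self N 2
    · exact Nat.choose_le_pow _ _
  rw [sum_pow', map_sum, ← sum_filter_of_ne (p := fun g => #(univ.image g) ≤ N / 2)
    fun g _ hg => (Nat.le_div_iff_mul_le two_pos).2 (by
      linarith [two_mul_card_image_le_of_map_prod_ne_zero φ hindep hident hmean hg])]
  calc ‖∑ g ∈ S, φ (∏ j, y (g j))‖ ≤ ∑ g ∈ S, ‖φ (∏ j, y (g j))‖ := norm_sum_le _ _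
    _ ≤ #S * B ^ N := by
        simpa using sum_le_card_nsmul S _ _ fun g _ =>
          norm_map_prod_comp_le φ hindep hident hB1 hB g
    _ ≤ (N ^ N * n ^ (N / 2) : ℕ) * B ^ N := by gcongr
    _ = (N * B) ^ N * n ^ (N / 2) := by push_cast; ring

theorem isBigO_map_sum_pow (hmean : φ (y 0) = 0) (N : ℕ) :
    (fun n => φ ((∑ i ∈ range n, y i) ^ N)) =O[atTop] fun n : ℕ => (n : ℝ) ^ (N / 2) := by
  set B := 1 + ∑ m ∈ range (N + 1), ‖φ (y 0 ^ m)‖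
  have hB1 : 1 ≤ B := le_add_of_nonneg_right (sum_nonneg fun _ _ => norm_nonneg _)
  have hB : ∀ m ≤ N, ‖φ (y 0 ^ m)‖ ≤ B := fun m hm =>
    (single_le_sum (f := fun m => ‖φ (y 0 ^ m)‖) (fun _ _ => norm_nonneg _)
      (mem_range.2 (Nat.lt_succ_of_le hm))).trans (le_add_of_nonneg_left zero_le_one)
  refine IsBigO.of_bound ((N * B) ^ N) ?_
  filter_upwards [eventually_ge_atTop (N / 2)] with n hn
  simpa using norm_map_sum_pow_le φ hindep hident hmean hn hB1 hB

theorem tendsto_map_smul_sum_pow_two_mul (hmean : φ (y 0) = 0) {k : ℕ} (hk : 0 < k) :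
    Tendsto (fun n : ℕ => φ (((n : 𝕜)⁻¹ • ∑ i ∈ range n, y i) ^ (2 * k))) atTop (𝓝 0) := by
  have hscale : (fun n : ℕ => (n : 𝕜)⁻¹ ^ (2 * k)) =O[atTop] fun n : ℕ => (n : ℝ)⁻¹ ^ (2 * k) :=
    IsBigO.of_bound' (Eventually.of_forall fun n => by simp)
  have hmoment := isBigO_map_sum_pow φ hindep hident hmean (2 * k)
  rw [Nat.mul_div_cancel_left k two_pos] at hmoment
  simp_rw [smul_pow, map_smul, smul_eq_mul]
  refine (hscale.mul hmoment).trans_tendsto ?_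
  have hlim : Tendsto (fun n : ℕ => (n : ℝ)⁻¹ ^ k) atTop (𝓝 0) := by
    simpa [zero_pow hk.ne'] using (tendsto_inv_atTop_nhds_zero_nat (𝕜 := ℝ)).pow k
  refine hlim.congr' ?_
  filter_upwards [eventually_ne_atTop 0] with n hn
  rw [two_mul, pow_add, mul_assoc, ← mul_pow, inv_mul_cancel₀ (by exact_mod_cast hn), one_pow,
    mul_one]

end Moments

section CStarAlgebra

variable {A : Type*} [CStarAlgebra A] [PartialOrder A] [StarOrderedRing A]

theorem PositiveLinearMap.norm_apply_sq_le (f : A →ₚ[ℂ] ℂ) (b : A) :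
    ‖f b‖ ^ 2 ≤ (f 1).re * (f (star b * b)).re := by
  have hcs := norm_inner_le_norm (𝕜 := ℂ) (f.toPreGNS 1) (f.toPreGNS b)
  rw [preGNS_inner_def] at hcs
  have hnorm : ∀ a : A, ‖f.toPreGNS a‖ ^ 2 = (f (star a * a)).re := fun a => by
    simpa [← Complex.ofReal_pow] using congrArg Complex.re (f.preGNS_norm_sq (f.toPreGNS a))
  calc ‖f b‖ ^ 2 ≤ (‖f.toPreGNS 1‖ * ‖f.toPreGNS b‖) ^ 2 := by
        gcongr
        simpa using hcs
    _ = (f 1).re * (f (star b * b)).re := by rw [mul_pow, hnorm, hnorm, star_one, one_mul]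

theorem PositiveLinearMap.norm_apply_sqrt_sq_pow_le (f : A →ₚ[ℂ] ℂ) (hf1 : f 1 = 1) {a : A}
    (ha : IsSelfAdjoint a) (k : ℕ) :
    ‖f (CFC.sqrt (a ^ 2) ^ k)‖ ≤ √‖f (a ^ (2 * k))‖ := by
  set b := CFC.sqrt (a ^ 2) ^ k
  have hb : star b * b = a ^ (2 * k) := by
    rw [((CFC.sqrt_nonneg _).isSelfAdjoint.pow k).star_eq, ← sq, ← pow_mul, mul_comm, pow_mul,
      CFC.sq_sqrt _ ha.sq_nonneg, ← pow_mul]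
  refine Real.le_sqrt_of_sq_le ?_
  calc ‖f b‖ ^ 2 ≤ (f 1).re * (f (star b * b)).re := f.norm_apply_sq_le b
    _ ≤ ‖f (a ^ (2 * k))‖ := by
        rw [hf1, hb, Complex.one_re, one_mul]
        exact Complex.re_le_norm _

end CStarAlgebra

/-- **Weak law of large numbers (algebraic form).**
Let `ω` be a state on a commutative unital C*-algebra `A` and `x : ℕ → A` a
sequence of self-adjoint elements that are `ω`-independent (expectations of
products of powers over distinct indices factor) and identically distributed
(`ω (x i ^ k) = ω (x 0 ^ k)` for all `i, k`).  With `μ = ω (x 0)` and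
`sₙ = (x 0 + ⋯ + x (n-1)) / n`, for every `k > 0` one has
`ω (|sₙ - μ•1|^k) → 0` as `n → ∞`, where `|a| = (a²)^{1/2}`. -/
theorem weak_law_of_large_numbers (A : Type*) [CommCStarAlgebra A]
    [PartialOrder A] [StarOrderedRing A]
    (ω : A →ₗ[ℂ] ℂ) (hω1 : ω 1 = 1) (hωpos : ∀ a : A, 0 ≤ a → 0 ≤ ω a)
    (x : ℕ → A) (hsa : ∀ i, IsSelfAdjoint (x i))
    (hindep : ∀ (m : ℕ) (idx : Fin m → ℕ), StrictMono idx →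
      ∀ k : Fin m → ℕ, (∀ j, 0 < k j) →
        ω (∏ j, x (idx j) ^ k j) = ∏ j, ω (x (idx j) ^ k j))
    (hid : ∀ i, ∀ k : ℕ, 0 < k → ω (x i ^ k) = ω (x 0 ^ k))
    (k : ℕ) (hk : 0 < k) :
    Filter.Tendsto
      (fun n : ℕ =>
        ω (CFC.sqrt ((((n : ℂ)⁻¹ • ∑ i ∈ Finset.range n, x i) - ω (x 0) • 1) ^ 2) ^ k))
      Filter.atTop (nhds 0) := by
  set f := PositiveLinearMap.mk₀ ω hωpos
  set μ := ω (x 0)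
  set a : ℕ → A := fun n => (n : ℂ)⁻¹ • ∑ i ∈ range n, x i - μ • 1
  have hμ : IsSelfAdjoint μ := (hsa 0).map' f
  have ha : ∀ n, IsSelfAdjoint (a n) := fun n =>
    ((IsSelfAdjoint.natCast n).inv₀.smul (isSelfAdjoint_sum _ fun i _ => hsa i)).sub
      (hμ.smul (.one A))
  have hcentered : ∀ n : ℕ, n ≠ 0 → (n : ℂ)⁻¹ • ∑ i ∈ range n, (x i - μ • 1) = a n := by
    intro n hn
    rw [sum_sub_distrib, smul_sub, sum_const, card_range, ← Nat.cast_smul_eq_nsmul ℂ, smul_smul,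
      inv_mul_cancel₀ (Nat.cast_ne_zero.2 hn), one_smul]
  have hmoment : Tendsto (fun n => ω (a n ^ (2 * k))) atTop (𝓝 0) := by
    refine (tendsto_map_smul_sum_pow_two_mul ω (map_prod_sub_smul_one_pow ω hω1 hindep μ)
      (map_sub_smul_one_pow_eq ω hid μ) (by simp [μ, hω1]) hk).congr' ?_
    filter_upwards [eventually_ne_atTop 0] with n hn
    rw [hcentered n hn]
  have hbound : ∀ n, ‖ω (CFC.sqrt (a n ^ 2) ^ k)‖ ≤ √‖ω (a n ^ (2 * k))‖ := fun n =>
    f.norm_apply_sqrt_sq_pow_le hω1 (ha n) k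
  exact squeeze_zero_norm hbound (by simpa using hmoment.norm.sqrt)
end

section
/- Let A be a commutative unital C*-algebra, ω a state on A, and x₁, x₂, … a sequence of self-adjoint, ω-independent, identically distributed elements (ω of products over distinct indices factors, and ω(xᵢ^k) = ω(x₁^k) for all i, k). Let μ = ω(x₁) and sₙ = (x₁ + ⋯ + xₙ)/n. Then for every ε > 0 there exists n₀ such that for all n > n₀, every element e of the closed ideal of A generated by (|sₙ − μ·1| − ε·1)₊ with 0 ≤ e ≤ 1 satisfies ω(e) < ε. -/
set_option maxHeartbeats 1000000

open scoped ComplexOrder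

lemma key_ineq (A : Type*) [CommCStarAlgebra A] [PartialOrder A] [StarOrderedRing A]
    [Nontrivial A] (a e : A) (ha : IsSelfAdjoint a) (ε : ℝ) (hε : 0 < ε)
    (he : e ∈ closure (Ideal.span {(CFC.sqrt (a ^ 2) - ε • 1)⁺} : Set A))
    (he0 : 0 ≤ e) (he1 : e ≤ 1) :
    0 ≤ a ^ 2 - (ε ^ 2 : ℝ) • e := by
  set c := CFC.sqrt (a ^ 2) with hc
  set b := (c - ε • 1)⁺ with hb
  have ha2 : (0 : A) ≤ a ^ 2 := by
    rw [pow_two]; nth_rw 1 [← ha.star_eq]; exact star_mul_self_nonneg a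
  have hcn : (0 : A) ≤ c := CFC.sqrt_nonneg (a := a ^ 2)
  have hc2 : c ^ 2 = a ^ 2 := CFC.sq_sqrt _ ha2
  have hone : IsSelfAdjoint ((ε : ℝ) • (1 : A)) := by
    exact IsSelfAdjoint.smul (star_trivial ε) (IsSelfAdjoint.one A)
  have hd : IsSelfAdjoint (c - ε • 1) := hcn.isSelfAdjoint.sub hone
  have hy : IsStarNormal (a ^ 2 - (ε ^ 2 : ℝ) • e) := ⟨mul_comm _ _⟩
  rw [StarOrderedRing.nonneg_iff_spectrum_nonneg (R := ℂ) _ hy]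
  intro z hz
  obtain ⟨χ, rfl⟩ := WeakDual.CharacterSpace.mem_spectrum_iff_exists.mp hz
  have hpos : ∀ v : A, 0 ≤ v → 0 ≤ χ v := fun v hv =>
    spectrum_nonneg_of_nonneg hv (AlgHom.apply_mem_spectrum (χ : A →ₐ[ℂ] ℂ) v)
  have hsmul : ∀ (r : ℝ) (v : A), χ (r • v) = (r : ℂ) * χ v := fun r v => by
    rw [← Complex.coe_smul, map_smul, smul_eq_mul]
  have hχe1 : χ e ≤ 1 := by
    have := hpos _ (sub_nonneg.mpr he1)
    rw [map_sub, map_one] at this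
    exact sub_nonneg.mp this
  have hχe0 : 0 ≤ χ e := hpos e he0
  have hkey : χ (a ^ 2 - (ε ^ 2 : ℝ) • e) = χ a ^ 2 - (ε : ℂ) ^ 2 * χ e := by
    rw [map_sub, map_pow, hsmul]; push_cast; ring
  rw [hkey]
  by_cases hqe : χ e = 0
  · rw [hqe, mul_zero, sub_zero, pow_two]
    nth_rw 1 [show χ a = star (χ a) by rw [← map_star, ha.star_eq]]
    exact star_mul_self_nonneg (χ a)
  · have hχb : χ b ≠ 0 := by
      intro h0
      apply hqe
      have hclosed : IsClosed ((χ : A → ℂ) ⁻¹' {0}) :=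
        IsClosed.preimage (map_continuous χ) isClosed_singleton
      have hsub : (Ideal.span {b} : Set A) ⊆ (χ : A → ℂ) ⁻¹' {0} := by
        intro v hv
        obtain ⟨r, rfl⟩ := Ideal.mem_span_singleton'.mp hv
        simp [map_mul, h0]
      exact (closure_minimal hsub hclosed he)
    have hbpos : 0 ≤ χ b := hpos b (CFC.posPart_nonneg _)
    have hnegzero : χ ((c - ε • 1)⁻) = 0 := by
      have h0 : χ b * χ ((c - ε • 1)⁻) = 0 := by
        rw [← map_mul, hb, CFC.posPart_mul_negPart, map_zero]
      exact (mul_eq_zero.mp h0).resolve_left hχb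
    have hχc : χ c = (ε : ℂ) + χ b := by
      have := CFC.posPart_sub_negPart (c - ε • 1) hd
      have h2 : χ b - χ ((c - ε • 1)⁻) = χ c - (ε : ℂ) := by
        rw [← map_sub, this, map_sub, hsmul, map_one, mul_one]
      rw [hnegzero, sub_zero] at h2
      linear_combination -h2
    have hεc : (ε : ℂ) < χ c := by
      rw [hχc]
      exact lt_add_of_pos_right _ (lt_of_le_of_ne hbpos (Ne.symm hχb))
    have hca : χ c ^ 2 = χ a ^ 2 := by
      rw [← map_pow, ← map_pow, hc2]
    have h1 : (ε : ℂ) ^ 2 * χ e ≤ (ε : ℂ) ^ 2 := by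
      calc (ε : ℂ) ^ 2 * χ e ≤ (ε : ℂ) ^ 2 * 1 :=
            mul_le_mul_of_nonneg_left hχe1 (by positivity)
        _ = (ε : ℂ) ^ 2 := mul_one _
    have h2 : (ε : ℂ) ^ 2 ≤ χ a ^ 2 := by
      rw [← hca]
      exact pow_le_pow_left₀ (by positivity) hεc.le 2
    exact sub_nonneg.mpr (h1.trans h2)

/-- **Probabilistic corollary of the weak law of large numbers.**
With `ω`, `x`, `μ = ω (x 0)` and `sₙ` as in the weak law of large numbers
(self-adjoint, `ω`-independent, identically distributed), for every `ε > 0` there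
is `n₀` such that for all `n > n₀`, every element `e` of the closed ideal generated
by `(|sₙ - μ•1| - ε•1)⁺` with `0 ≤ e ≤ 1` satisfies `ω e < ε`. -/
theorem prob_concentration_of_lln (A : Type*) [CommCStarAlgebra A]
    [PartialOrder A] [StarOrderedRing A]
    (ω : A →ₗ[ℂ] ℂ) (hω1 : ω 1 = 1) (hωpos : ∀ a : A, 0 ≤ a → 0 ≤ ω a)
    (x : ℕ → A) (hsa : ∀ i, IsSelfAdjoint (x i))
    (hindep : ∀ (m : ℕ) (idx : Fin m → ℕ), StrictMono idx →
      ∀ k : Fin m → ℕ, (∀ j, 0 < k j) →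
        ω (∏ j, x (idx j) ^ k j) = ∏ j, ω (x (idx j) ^ k j))
    (hid : ∀ i, ∀ k : ℕ, 0 < k → ω (x i ^ k) = ω (x 0 ^ k))
    (ε : ℝ) (hε : 0 < ε) :
    ∃ n₀ : ℕ, ∀ n > n₀,
      ∀ e ∈ closure (Ideal.span
          {(CFC.sqrt ((((n : ℂ)⁻¹ • ∑ i ∈ Finset.range n, x i) - ω (x 0) • 1) ^ 2)
            - ε • 1)⁺} : Set A),
        0 ≤ e → e ≤ 1 → ω e < (ε : ℂ) := by
  have hnt : Nontrivial A := by
    refine ⟨1, 0, fun h => ?_⟩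
    rw [h, map_zero] at hω1
    exact one_ne_zero hω1.symm
  set μ := ω (x 0) with hμ
  set α := ω (x 0 ^ 2) with hα
  -- the state is real on nonneg elements, hence μ is real
  have hstar : ∀ z : ℂ, 0 ≤ z → star z = z := fun z hz => by
    rw [Complex.star_def, Complex.conj_eq_iff_im]
    exact (Complex.le_def.mp hz).2.symm
  have hμreal : star μ = μ := by
    have hx0 : x 0 = (x 0)⁺ - (x 0)⁻ := (CFC.posPart_sub_negPart (x 0) (hsa 0)).symm
    rw [hμ, hx0, map_sub, star_sub,
      hstar _ (hωpos _ (CFC.posPart_nonneg _)), hstar _ (hωpos _ (CFC.negPart_nonneg _))]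
  -- moments
  have hxi : ∀ i, ω (x i) = μ := fun i => by simpa using hid i 1 one_pos
  have hxii : ∀ i, ω (x i * x i) = α := fun i => by
    have := hid i 2 two_pos
    rw [← hα] at this
    simpa [pow_two] using this
  have hij : ∀ i j, i < j → ω (x i * x j) = μ ^ 2 := by
    intro i j hlt
    have hmono : StrictMono ![i, j] := by
      intro u v huv
      fin_cases u <;> fin_cases v <;> simp_all
    have h2 := hindep 2 ![i, j] hmono ![1, 1] (fun j => by fin_cases j <;> norm_num)
    simp only [Fin.prod_univ_two, Matrix.cons_val_zero, Matrix.cons_val_one, Matrix.head_cons,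
      pow_one] at h2
    rw [h2, hxi, hxi, pow_two]
  have hmul : ∀ i j, ω (x i * x j) = if i = j then α else μ ^ 2 := by
    intro i j
    rcases lt_trichotomy i j with h | h | h
    · rw [if_neg h.ne]; exact hij i j h
    · rw [if_pos h, h]; exact hxii j
    · rw [if_neg h.ne', mul_comm]; exact hij j i h
  -- variance formula
  have hvar : ∀ n : ℕ, 0 < n →
      ω ((((n : ℂ)⁻¹ • ∑ i ∈ Finset.range n, x i) - μ • 1) ^ 2) = (α - μ ^ 2) / n := by
    intro n hn
    have hn' : (n : ℂ) ≠ 0 := Nat.cast_ne_zero.mpr hn.ne'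
    set S := ∑ i ∈ Finset.range n, x i with hS
    have hωS : ω S = n * μ := by
      rw [hS, map_sum, Finset.sum_congr rfl (fun i _ => hxi i), Finset.sum_const,
        Finset.card_range, nsmul_eq_mul]
    have hωSS : ω (S * S) = n * α + (n : ℂ) * ((n : ℂ) - 1) * μ ^ 2 := by
      rw [hS, Finset.sum_mul_sum, map_sum]
      simp_rw [map_sum, hmul]
      have hinner : ∀ i ∈ Finset.range n,
          ∑ j ∈ Finset.range n, (if i = j then α else μ ^ 2)
            = α + ((n : ℂ) - 1) * μ ^ 2 := by
        intro i hi
        rw [← Finset.add_sum_erase _ _ hi, if_pos rfl]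
        congr 1
        rw [Finset.sum_congr rfl (fun j hj =>
          if_neg (fun h => (Finset.ne_of_mem_erase hj) h.symm)),
          Finset.sum_const, Finset.card_erase_of_mem hi, Finset.card_range,
          nsmul_eq_mul, Nat.cast_sub hn, Nat.cast_one]
      rw [Finset.sum_congr rfl hinner, Finset.sum_const, Finset.card_range, nsmul_eq_mul]
      ring
    have hexp : ((n : ℂ)⁻¹ • S - μ • 1) ^ 2
        = ((n : ℂ)⁻¹ * (n : ℂ)⁻¹) • (S * S) - (2 * (n : ℂ)⁻¹ * μ) • S + (μ * μ) • (1 : A) := by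
      simp only [Algebra.smul_def, map_mul, map_ofNat]
      ring
    rw [hexp, map_add, map_sub, map_smul, map_smul, map_smul, hωSS, hωS, hω1,
      smul_eq_mul, smul_eq_mul, smul_eq_mul]
    field_simp
    ring
  -- the elements sₙ - μ are self-adjoint
  have hsan : ∀ n : ℕ, IsSelfAdjoint (((n : ℂ)⁻¹ • ∑ i ∈ Finset.range n, x i) - μ • 1) := by
    intro n
    refine IsSelfAdjoint.sub ?_ ?_
    · rw [IsSelfAdjoint, star_smul, star_sum]
      rw [Finset.sum_congr rfl (fun i _ => (hsa i).star_eq)]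
      congr 1
      simp [RCLike.star_def]
    · rw [IsSelfAdjoint, star_smul, star_one, hμreal]
  -- nonnegativity of the variance
  have hvar_nonneg : 0 ≤ α - μ ^ 2 := by
    have h1 := hvar 1 one_pos
    have heq : α - μ ^ 2 = (α - μ ^ 2) / (((1 : ℕ) : ℂ)) := by norm_num
    rw [heq, ← h1]
    refine hωpos _ ?_
    rw [pow_two]
    nth_rw 1 [← (hsan 1).star_eq]
    exact star_mul_self_nonneg _
  set r : ℝ := (α - μ ^ 2).re with hr
  have hrc : ((r : ℝ) : ℂ) = α - μ ^ 2 := by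
    apply Complex.ext <;> simp [hr, ((Complex.le_def.mp hvar_nonneg).2).symm]
  have hr0 : 0 ≤ r := (Complex.le_def.mp hvar_nonneg).1
  refine ⟨max 1 ⌈r / ε ^ 3⌉₊, fun n hn e he he0 he1 => ?_⟩
  have hn1 : 0 < n := lt_of_lt_of_le (lt_of_lt_of_le one_pos (le_max_left _ _)) hn.le
  have hnr : r / (n : ℝ) < ε ^ 3 := by
    have h2 : (⌈r / ε ^ 3⌉₊ : ℕ) < n := lt_of_le_of_lt (le_max_right _ _) hn
    have h3 : r / ε ^ 3 < (n : ℝ) := lt_of_le_of_lt (Nat.le_ceil _) (by exact_mod_cast h2)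
    rw [div_lt_iff₀ (by exact_mod_cast hn1)]
    calc r = (r / ε ^ 3) * ε ^ 3 := by field_simp
      _ < (n : ℝ) * ε ^ 3 := mul_lt_mul_of_pos_right h3 (by positivity)
      _ = ε ^ 3 * n := mul_comm _ _
  -- apply the key inequality
  have hkey := key_ineq A _ e (hsan n) ε hε he he0 he1
  have hωkey := hωpos _ hkey
  rw [map_sub, hvar n hn1] at hωkey
  have hsmulω : ω ((ε ^ 2 : ℝ) • e) = ((ε ^ 2 : ℝ) : ℂ) * ω e := by
    rw [← Complex.coe_smul, map_smul, smul_eq_mul]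
  rw [hsmulω] at hωkey
  -- extract reals
  have hωe0 : 0 ≤ ω e := hωpos e he0
  have hωe_im : (ω e).im = 0 := (Complex.le_def.mp hωe0).2.symm
  have hωe_re : 0 ≤ (ω e).re := (Complex.le_def.mp hωe0).1
  obtain ⟨t, ht⟩ : ∃ t : ℝ, ω e = ((t : ℝ) : ℂ) :=
    ⟨(ω e).re, by apply Complex.ext <;> simp [hωe_im]⟩
  have ht0 : 0 ≤ t := by rw [ht] at hωe0; exact_mod_cast hωe0
  have hc : (0 : ℂ) ≤ (((r / n - ε ^ 2 * t : ℝ) : ℂ)) := by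
    have heq2 : (α - μ ^ 2) / (n : ℂ) - ((ε ^ 2 : ℝ) : ℂ) * ω e
        = (((r / n - ε ^ 2 * t : ℝ) : ℂ)) := by
      rw [← hrc, ht]
      push_cast
      ring
    rwa [heq2] at hωkey
  have hreal : (0 : ℝ) ≤ r / n - ε ^ 2 * t := by exact_mod_cast hc
  have hfinal : t < ε := by nlinarith [hε, hnr, ht0]
  rw [ht]
  exact Complex.real_lt_real.mpr hfinal
end

section
/- (Kraft inequality.) Let n ≥ 1 and let w₁, …, w_m be codewords over an alphabet of size n, i.e. wᵢ : Fin kᵢ → Fin n with word-lengths k₁ ≤ k₂ ≤ … ≤ k_m, which form a prefix-free family: for i ≠ j, neither wᵢ is an initial segment of wⱼ nor wⱼ of wᵢ. Then ∑_{i=1}^m n^{k_m − kᵢ} ≤ n^{k_m} (equivalently, ∑_{i=1}^m n^{−kᵢ} ≤ 1). -/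
/-- `w` is an initial segment (prefix) of `w'`: `k ≤ k'` and `w'` agrees with `w`
on the first `k` letters. -/
def IsPrefixWord {n k k' : ℕ} (w : Fin k → Fin n) (w' : Fin k' → Fin n) : Prop :=
  ∃ h : k ≤ k', ∀ j : Fin k, w' (Fin.castLE h j) = w j

/-- **Kraft inequality.**
Let `w i : Fin (k i) → Fin n` (`i : Fin (m+1)`) be codewords over an alphabet of
size `n ≥ 1` with monotone word-lengths `k`, forming a prefix-free family (for
`i ≠ j`, `w i` is not an initial segment of `w j`).  Then, with `K = k (last)` the
largest length, `∑ i, n ^ (K - k i) ≤ n ^ K`. -/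
theorem kraft_inequality (n : ℕ) (hn : 1 ≤ n) (m : ℕ)
    (k : Fin (m + 1) → ℕ) (hk : Monotone k)
    (w : (i : Fin (m + 1)) → Fin (k i) → Fin n)
    (hpf : ∀ i j, i ≠ j → ¬ IsPrefixWord (w i) (w j)) :
    ∑ i, n ^ (k (Fin.last m) - k i) ≤ n ^ (k (Fin.last m)) := by
  classical
  set K := k (Fin.last m) with hK
  have hkK : ∀ i, k i ≤ K := fun i => hk (Fin.le_last i)
  -- the set of extensions of `w i` to length `K`
  set S : Fin (m + 1) → Finset (Fin K → Fin n) :=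
    fun i => Finset.univ.filter
      (fun f => ∀ j : Fin (k i), f (Fin.castLE (hkK i) j) = w i j) with hS
  -- cardinality of each `S i`
  have hcard : ∀ i, (S i).card = n ^ (K - k i) := by
    intro i
    have : (S i).card = (Finset.univ : Finset (Fin (K - k i) → Fin n)).card := by
      apply Finset.card_bij'
        (i := fun f _ => fun j : Fin (K - k i) =>
          f ⟨k i + j.1, by omega⟩)
        (j := fun g _ => fun p : Fin K =>
          if h : p.1 < k i then w i ⟨p.1, h⟩ else g ⟨p.1 - k i, by omega⟩)
      · intro f hf
        simp only [hS, Finset.mem_filter, Finset.mem_univ, true_and] at hf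
        funext p
        by_cases h : p.1 < k i
        · simp only [h, dif_pos]
          have := hf ⟨p.1, h⟩
          simpa using this.symm.trans (congrArg f (by ext; rfl))
        · simp only [h, dif_neg]
          exact congrArg f (Fin.ext (by simp; omega))
      · intro g hg
        funext j
        simp only []
        rw [dif_neg (by omega)]
        congr 1
        ext
        simp
      · intro f hf; exact Finset.mem_univ _
      · intro g hg
        simp only [hS, Finset.mem_filter, Finset.mem_univ, true_and]
        intro j
        rw [dif_pos (by simpa using j.2)]
        exact congrArg (w i) (Fin.ext rfl)
    simpa using this
  -- pairwise disjointness
  have hdisj : ∀ i ∈ (Finset.univ : Finset (Fin (m + 1))), ∀ j ∈ Finset.univ,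
      i ≠ j → Disjoint (S i) (S j) := by
    intro i _ j _ hij
    rw [Finset.disjoint_left]
    intro f hfi hfj
    simp only [hS, Finset.mem_filter, Finset.mem_univ, true_and] at hfi hfj
    rcases le_total (k i) (k j) with h | h
    · refine hpf i j hij ⟨h, ?_⟩
      intro a
      have h1 := hfj (Fin.castLE h a)
      have h2 := hfi a
      rw [← h2, ← h1]
      exact congrArg f (Fin.ext rfl)
    · refine hpf j i hij.symm ⟨h, ?_⟩
      intro a
      have h1 := hfi (Fin.castLE h a)
      have h2 := hfj a
      rw [← h2, ← h1]
      exact congrArg f (Fin.ext rfl)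
  calc ∑ i, n ^ (K - k i) = ∑ i, (S i).card := by
        simp [hcard]
    _ = (Finset.univ.biUnion S).card := (Finset.card_biUnion hdisj).symm
    _ ≤ (Finset.univ : Finset (Fin K → Fin n)).card := Finset.card_le_card (Finset.subset_univ _)
    _ = n ^ K := by simp [Fintype.card_fun]
end

section
/- Let f be a continuous real function on (0, ∞) such that the function g defined by g(x) = x·f(x) for x > 0 and g(0) = 0 is convex on [0, ∞). Let p₁, …, pₙ ≥ 0 with ∑ᵢ pᵢ = 1 and let a₁, …, aₙ > 0 with ∑ᵢ aᵢ ≤ 1. Then ∑_{i : pᵢ > 0} pᵢ·f(pᵢ/aᵢ) ≥ f(1). -/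
/-- **Convexity lemma for entropy bounds.**
Let `f` be continuous on `(0, ∞)` and suppose `g`, defined by `g x = x * f x` for
`x > 0` and `g 0 = 0`, is convex on `[0, ∞)`.  If `p i ≥ 0` with `∑ i, p i = 1`
and `a i > 0` with `∑ i, a i ≤ 1`, then `∑_{i : 0 < p i} p i * f (p i / a i) ≥ f 1`. -/
theorem entropy_convexity_lemma (f g : ℝ → ℝ)
    (hf : ContinuousOn f (Set.Ioi (0 : ℝ)))
    (hg0 : g 0 = 0) (hgf : ∀ x : ℝ, 0 < x → g x = x * f x)
    (hgconv : ConvexOn ℝ (Set.Ici (0 : ℝ)) g)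
    (n : ℕ) (p a : Fin n → ℝ)
    (hp : ∀ i, 0 ≤ p i) (hpsum : ∑ i, p i = 1)
    (ha : ∀ i, 0 < a i) (hasum : ∑ i, a i ≤ 1) :
    f 1 ≤ ∑ i ∈ Finset.univ.filter (fun i => 0 < p i), p i * f (p i / a i) := by
  classical
  set S := ∑ i, a i with hS
  have hS0 : 0 ≤ 1 - S := by linarith
  set w : Option (Fin n) → ℝ := fun o => o.elim (1 - S) a with hw
  set z : Option (Fin n) → ℝ := fun o => o.elim 0 (fun i => p i / a i) with hz
  have hwsum : ∑ o : Option (Fin n), w o = 1 := by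
    rw [Fintype.sum_option]
    simp only [hw, Option.elim]
    rw [← hS]; ring
  have hzsum : ∑ o : Option (Fin n), w o • z o = 1 := by
    rw [Fintype.sum_option]
    simp only [hw, hz, Option.elim, smul_eq_mul, mul_zero, zero_add]
    calc ∑ i, a i * (p i / a i) = ∑ i, p i :=
          Finset.sum_congr rfl fun i _ => by
            rw [mul_comm, div_mul_cancel₀ _ (ha i).ne']
      _ = 1 := hpsum
  have key := hgconv.map_sum_le (t := Finset.univ) (w := w) (p := z)
    (fun o _ => ?_) hwsum (fun o _ => ?_)
  · rw [hzsum] at key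
    have hg1 : g 1 = f 1 := by rw [hgf 1 one_pos, one_mul]
    rw [hg1] at key
    refine key.trans (le_of_eq ?_)
    rw [Fintype.sum_option]
    simp only [hw, hz, Option.elim, smul_eq_mul, hg0, mul_zero, zero_add]
    rw [Finset.sum_filter]
    refine Finset.sum_congr rfl fun i _ => ?_
    by_cases hpi : 0 < p i
    · rw [if_pos hpi, hgf _ (div_pos hpi (ha i))]
      rw [mul_comm, mul_right_comm, div_mul_cancel₀ _ (ha i).ne']
    · have : p i = 0 := le_antisymm (not_lt.mp hpi) (hp i)
      rw [if_neg hpi, this, zero_div, hg0, mul_zero]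
  · cases o with
    | none => exact hS0
    | some i => exact (ha i).le
  · cases o with
    | none => exact le_refl (0:ℝ)
    | some i => exact div_nonneg (hp i) (ha i).le
end

section
/- (Noiseless coding bound.) Let D ≥ 2 be an integer, let p₁, …, pₙ ≥ 0 with ∑ᵢ pᵢ = 1, and let k₁, …, kₙ be positive integers satisfying the Kraft inequality ∑ᵢ D^{−kᵢ} ≤ 1 (as holds for the word-lengths of any prefix-free code over an alphabet of size D). Then the expected code length dominates the entropy: (∑ᵢ pᵢ·kᵢ)·log D ≥ −∑_{i : pᵢ > 0} pᵢ·log pᵢ, where log is the natural logarithm. -/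
/-! The Kraft weights `qᵢ = D^{-kᵢ}` form a sub-probability vector with `-log qᵢ = kᵢ log D`,
so the bound is Gibbs' inequality `∑ pᵢ log qᵢ ≤ ∑ pᵢ log pᵢ`, which in turn is the pointwise
estimate `log x ≤ x - 1` at `x = qᵢ / pᵢ`, summed. -/

open Real Finset

lemma Real.mul_log_le_mul_log_add_sub {p q : ℝ} (hp : 0 ≤ p) (hq : 0 < q) :
    p * log q ≤ p * log p + (q - p) := by
  rcases hp.eq_or_lt with rfl | hp
  · simpa using hq.le
  have hlog : log q - log p ≤ q / p - 1 := by
    rw [← log_div hq.ne' hp.ne']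
    exact log_le_sub_one_of_pos (div_pos hq hp)
  calc p * log q = p * log p + p * (log q - log p) := by ring
    _ ≤ p * log p + p * (q / p - 1) := by gcongr
    _ = p * log p + (q - p) := by field_simp

theorem Real.sum_mul_log_le_sum_mul_log {ι : Type*} (s : Finset ι) {p q : ι → ℝ}
    (hp : ∀ i ∈ s, 0 ≤ p i) (hq : ∀ i ∈ s, 0 < q i) (hqp : ∑ i ∈ s, q i ≤ ∑ i ∈ s, p i) :
    ∑ i ∈ s, p i * log (q i) ≤ ∑ i ∈ s, p i * log (p i) :=
  calc ∑ i ∈ s, p i * log (q i)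
      ≤ ∑ i ∈ s, (p i * log (p i) + (q i - p i)) :=
        sum_le_sum fun i hi => mul_log_le_mul_log_add_sub (hp i hi) (hq i hi)
    _ = ∑ i ∈ s, p i * log (p i) + (∑ i ∈ s, q i - ∑ i ∈ s, p i) := by
        rw [sum_add_distrib, sum_sub_distrib]
    _ ≤ ∑ i ∈ s, p i * log (p i) := by linarith

lemma sum_filter_pos_mul_log {ι : Type*} (s : Finset ι) {p : ι → ℝ} (hp : ∀ i ∈ s, 0 ≤ p i) :
    ∑ i ∈ s with 0 < p i, p i * log (p i) = ∑ i ∈ s, p i * log (p i) :=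
  sum_filter_of_ne fun i hi hne =>
    (hp i hi).lt_of_ne fun h => hne (by rw [← h, zero_mul])

theorem noiseless_coding_bound_general (D : ℕ) (hD : 2 ≤ D) (n : ℕ)
    (p : Fin n → ℝ) (k : Fin n → ℕ)
    (hp : ∀ i, 0 ≤ p i) (hpsum : ∑ i, p i = 1)
    (hkraft : ∑ i, ((D : ℝ) ^ (k i))⁻¹ ≤ 1) :
    -∑ i ∈ Finset.univ.filter (fun i => 0 < p i), p i * Real.log (p i) ≤
      (∑ i, p i * (k i : ℝ)) * Real.log D := by
  have hDpos : (0 : ℝ) < D := Nat.cast_pos.mpr (by omega)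
  have hgibbs := sum_mul_log_le_sum_mul_log univ (fun i _ => hp i)
    (fun i _ => inv_pos.mpr (pow_pos hDpos (k i))) (hpsum ▸ hkraft)
  have hlog_kraft : ∀ i, p i * log ((D : ℝ) ^ k i)⁻¹ = -(p i * k i * log D) := fun i => by
    rw [log_inv, log_pow]; ring
  simp only [hlog_kraft, sum_neg_distrib] at hgibbs
  rw [sum_filter_pos_mul_log univ fun i _ => hp i, sum_mul]
  linarith

/-- **Noiseless coding bound.**
Let `D ≥ 2`, let `p : Fin n → ℝ` be a probability vector, and let `k i` be positive
integers satisfying the Kraft inequality `∑ i, D^(-k i) ≤ 1` (as for the word-lengths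
of any prefix-free code over an alphabet of size `D`).  Then the expected code length
dominates the entropy: `(∑ i, p i * k i) * log D ≥ -∑_{i : 0 < p i} p i * log (p i)`,
with `log` the natural logarithm. -/
theorem noiseless_coding_bound (D : ℕ) (hD : 2 ≤ D) (n : ℕ)
    (p : Fin n → ℝ) (k : Fin n → ℕ)
    (hp : ∀ i, 0 ≤ p i) (hpsum : ∑ i, p i = 1)
    (hk : ∀ i, 0 < k i)
    (hkraft : ∑ i, ((D : ℝ) ^ (k i))⁻¹ ≤ 1) :
    -∑ i ∈ Finset.univ.filter (fun i => 0 < p i), p i * Real.log (p i) ≤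
      (∑ i, p i * (k i : ℝ)) * Real.log D :=
  noiseless_coding_bound_general D hD n p k hp hpsum hkraft
end

section
/- (Asymptotic Equipartition Property, probability part.) Let d ≥ 1 and p : Fin d → ℝ with p(i) > 0 for all i and ∑ᵢ p(i) = 1; let H = −∑ᵢ p(i)·log₂ p(i). For a string x ∈ (Fin d)ⁿ let Pₙ(x) = ∏_{j=1}^n p(xⱼ), and for ε > 0 let Tₙ(ε) = { x ∈ (Fin d)ⁿ : 2^{−n(H+ε)} ≤ Pₙ(x) ≤ 2^{−n(H−ε)} }. Then for every ε > 0 there exists n₀ such that for all n > n₀, ∑_{x ∈ Tₙ(ε)} Pₙ(x) > 1 − ε. -/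
/-- The Shannon entropy (base 2) of the distribution `p` on `Fin d`. -/
noncomputable def shannonEntropy2 (d : ℕ) (p : Fin d → ℝ) : ℝ :=
  -∑ i, p i * Real.logb 2 (p i)

/-- The probability of the string `x : Fin n → Fin d` under the `n`-fold product
distribution induced by `p`. -/
noncomputable def productProb (d n : ℕ) (p : Fin d → ℝ) (x : Fin n → Fin d) : ℝ :=
  ∏ j, p (x j)

open scoped Classical in
/-- The set of `ε`-typical strings of length `n`: those `x` with
`2^(-n(H+ε)) ≤ Pₙ(x) ≤ 2^(-n(H-ε))`, where `H` is the base-2 entropy of `p`. -/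
noncomputable def typicalSet (d n : ℕ) (p : Fin d → ℝ) (ε : ℝ) : Finset (Fin n → Fin d) :=
  Finset.univ.filter fun x =>
    (2 : ℝ) ^ (-(n : ℝ) * (shannonEntropy2 d p + ε)) ≤ productProb d n p x ∧
      productProb d n p x ≤ (2 : ℝ) ^ (-(n : ℝ) * (shannonEntropy2 d p - ε))

/-- Product-measure factorization: a sum over strings of a product of per-coordinate
functions factors as a product of sums. -/
lemma aep_prod_meas {d n : ℕ} (f : Fin n → Fin d → ℝ) :
    ∑ x : Fin n → Fin d, ∏ j, f j (x j) = ∏ j, ∑ i, f j i :=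
  (Fintype.prod_sum f).symm

/-- Covariance computation for the product measure: if `h` has mean zero, then
`E[h(X_j) h(X_k)]` is the variance if `j = k` and zero otherwise. -/
lemma aep_cov {d n : ℕ} (p : Fin d → ℝ) (hpsum : ∑ i, p i = 1)
    (h : Fin d → ℝ) (hzero : ∑ i, p i * h i = 0) (j0 k0 : Fin n) :
    ∑ x : Fin n → Fin d, (∏ j, p (x j)) * (h (x j0) * h (x k0)) =
      if j0 = k0 then ∑ i, p i * h i ^ 2 else 0 := by
  classical
  set f : Fin n → Fin d → ℝ := fun l i =>
    p i * (if l = j0 then h i else 1) * (if l = k0 then h i else 1) with hf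
  have key : ∀ x : Fin n → Fin d,
      (∏ j, p (x j)) * (h (x j0) * h (x k0)) = ∏ j, f j (x j) := by
    intro x
    simp only [hf, Finset.prod_mul_distrib]
    rw [Finset.prod_ite_eq' Finset.univ j0 (fun j => h (x j)),
      Finset.prod_ite_eq' Finset.univ k0 (fun j => h (x j))]
    simp [mul_assoc]
  rw [Finset.sum_congr rfl (fun x _ => key x), aep_prod_meas]
  by_cases hjk : j0 = k0
  · subst hjk
    have : ∀ l : Fin n, ∑ i, f l i = if l = j0 then ∑ i, p i * h i ^ 2 else 1 := by
      intro l
      by_cases hl : l = j0 <;> simp [hf, hl, hpsum, sq, mul_assoc]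
    rw [Finset.prod_congr rfl (fun l _ => this l), Finset.prod_ite_eq' Finset.univ j0]
    simp
  · simp only [if_neg hjk]
    apply Finset.prod_eq_zero (Finset.mem_univ j0)
    have : ∀ i, f j0 i = p i * h i := by
      intro i; simp [hf, if_neg hjk]
    rw [Finset.sum_congr rfl (fun i _ => this i), hzero]

/-- Variance of a sum of iid mean-zero variables is `n` times the variance. -/
lemma aep_var {d n : ℕ} (p : Fin d → ℝ) (hpsum : ∑ i, p i = 1)
    (h : Fin d → ℝ) (hzero : ∑ i, p i * h i = 0) :
    ∑ x : Fin n → Fin d, (∏ j, p (x j)) * (∑ j, h (x j)) ^ 2 =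
      n * ∑ i, p i * h i ^ 2 := by
  classical
  have expand : ∀ x : Fin n → Fin d,
      (∏ j, p (x j)) * (∑ j, h (x j)) ^ 2 =
        ∑ j0 : Fin n, ∑ k0 : Fin n, (∏ j, p (x j)) * (h (x j0) * h (x k0)) := by
    intro x
    rw [sq, Finset.sum_mul_sum]
    rw [Finset.mul_sum]
    exact Finset.sum_congr rfl fun j0 _ => by rw [Finset.mul_sum]
  rw [Finset.sum_congr rfl (fun x _ => expand x)]
  rw [Finset.sum_comm]
  have : ∀ j0 : Fin n,
      ∑ x : Fin n → Fin d, ∑ k0 : Fin n, (∏ j, p (x j)) * (h (x j0) * h (x k0)) =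
        ∑ i, p i * h i ^ 2 := by
    intro j0
    rw [Finset.sum_comm]
    rw [Finset.sum_congr rfl (fun k0 _ => aep_cov p hpsum h hzero j0 k0)]
    simp
  rw [Finset.sum_congr rfl (fun j0 _ => this j0)]
  simp [mul_comm]

/-- **Asymptotic Equipartition Property (probability part).**
For a probability vector `p` on `Fin d` with all `p i > 0` and any `ε > 0`, the
total probability of the `ε`-typical set of strings of length `n` exceeds `1 - ε`
for all sufficiently large `n`. -/
theorem aep_probability (d : ℕ) (hd : 1 ≤ d) (p : Fin d → ℝ)
    (hp : ∀ i, 0 < p i) (hpsum : ∑ i, p i = 1)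
    (ε : ℝ) (hε : 0 < ε) :
    ∃ n₀ : ℕ, ∀ n > n₀,
      1 - ε < ∑ x ∈ typicalSet d n p ε, productProb d n p x := by
  classical
  set H := shannonEntropy2 d p with hH
  set g : Fin d → ℝ := fun i => Real.logb 2 (p i) with hg
  set m : ℝ := ∑ i, p i * g i with hm
  have hmH : m = -H := by simp [hm, hH, shannonEntropy2, hg]
  set h : Fin d → ℝ := fun i => g i - m with hh
  have hzero : ∑ i, p i * h i = 0 := by
    simp only [hh, mul_sub]
    rw [Finset.sum_sub_distrib, ← hm, ← Finset.sum_mul, hpsum]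
    ring
  set V : ℝ := ∑ i, p i * h i ^ 2 with hV
  have hVnonneg : 0 ≤ V := Finset.sum_nonneg fun i _ =>
    mul_nonneg (hp i).le (sq_nonneg _)
  refine ⟨Nat.ceil (V / ε ^ 3), fun n hn => ?_⟩
  -- basic facts about the measure
  have hμpos : ∀ x : Fin n → Fin d, 0 < productProb d n p x := fun x =>
    Finset.prod_pos fun j _ => hp (x j)
  have hμtotal : ∑ x : Fin n → Fin d, productProb d n p x = 1 := by
    unfold productProb
    rw [aep_prod_meas fun _ i => p i]
    simp [hpsum]
  -- express productProb as a power of 2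
  have hprod2 : ∀ x : Fin n → Fin d,
      productProb d n p x = (2 : ℝ) ^ (∑ j, g (x j)) := by
    intro x
    unfold productProb
    have : ∀ j : Fin n, p (x j) = (2 : ℝ) ^ g (x j) := fun j =>
      (Real.rpow_logb two_pos (by norm_num) (hp (x j))).symm
    rw [Finset.prod_congr rfl (fun j _ => this j)]
    rw [Real.rpow_def_of_pos two_pos, Finset.mul_sum, Real.exp_sum]
    exact Finset.prod_congr rfl fun j _ => Real.rpow_def_of_pos two_pos _
  -- membership characterization
  have hmem : ∀ x : Fin n → Fin d,
      x ∈ typicalSet d n p ε ↔ |∑ j, h (x j)| ≤ (n : ℝ) * ε := by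
    intro x
    have hsum : ∑ j, h (x j) = (∑ j, g (x j)) - n * m := by
      simp [hh, Finset.sum_sub_distrib, mul_comm]
    rw [typicalSet, Finset.mem_filter]
    simp only [Finset.mem_univ, true_and, hprod2 x, ← hH,
      Real.rpow_le_rpow_left_iff (by norm_num : (1:ℝ) < 2)]
    rw [abs_le]
    constructor
    · rintro ⟨h1, h2⟩
      constructor <;> [skip; skip] <;> rw [hsum] <;> rw [hmH] at * <;> nlinarith
    · rintro ⟨h1, h2⟩
      rw [hsum, hmH] at h1 h2
      constructor <;> nlinarith
  -- Chebyshev bound on the complement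
  set T := typicalSet d n p ε with hT
  have hVn : ∑ x : Fin n → Fin d, productProb d n p x * (∑ j, h (x j)) ^ 2 = n * V := by
    unfold productProb
    exact aep_var p hpsum h hzero
  have hcompl : ((n : ℝ) * ε) ^ 2 * ∑ x ∈ Tᶜ, productProb d n p x ≤ n * V := by
    rw [Finset.mul_sum]
    calc ∑ x ∈ Tᶜ, ((n : ℝ) * ε) ^ 2 * productProb d n p x
        ≤ ∑ x ∈ Tᶜ, productProb d n p x * (∑ j, h (x j)) ^ 2 := by
          apply Finset.sum_le_sum
          intro x hx
          rw [Finset.mem_compl, hmem x, not_le] at hx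
          have h1 : ((n : ℝ) * ε) ^ 2 ≤ (∑ j, h (x j)) ^ 2 := by
            rw [← sq_abs (∑ j, h (x j))]
            apply pow_le_pow_left₀ (by positivity) hx.le
          calc ((n : ℝ) * ε) ^ 2 * productProb d n p x
              ≤ (∑ j, h (x j)) ^ 2 * productProb d n p x :=
                mul_le_mul_of_nonneg_right h1 (hμpos x).le
            _ = productProb d n p x * (∑ j, h (x j)) ^ 2 := mul_comm _ _
      _ ≤ ∑ x : Fin n → Fin d, productProb d n p x * (∑ j, h (x j)) ^ 2 := by
          apply Finset.sum_le_sum_of_subset_of_nonneg (Finset.subset_univ _)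
          intro x _ _
          exact mul_nonneg (hμpos x).le (sq_nonneg _)
      _ = n * V := hVn
  have hnpos : 0 < (n : ℝ) := by
    have : 0 < n := lt_of_le_of_lt (Nat.zero_le _) hn
    exact_mod_cast this
  have hnV : (n : ℝ) * ε ^ 3 > V := by
    have h1 : V / ε ^ 3 ≤ (Nat.ceil (V / ε ^ 3) : ℝ) := Nat.le_ceil _
    have h2 : (Nat.ceil (V / ε ^ 3) : ℝ) < n := by exact_mod_cast hn
    have h3 : V / ε ^ 3 < n := lt_of_le_of_lt h1 h2
    calc V = V / ε ^ 3 * ε ^ 3 := by field_simp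
      _ < n * ε ^ 3 := by
          apply mul_lt_mul_of_pos_right h3 (by positivity)
  have hbound : ∑ x ∈ Tᶜ, productProb d n p x < ε := by
    have hne : (0:ℝ) < ((n : ℝ) * ε) ^ 2 := by positivity
    rw [← le_div_iff₀' hne] at hcompl
    apply lt_of_le_of_lt hcompl
    rw [div_lt_iff₀ hne]
    have : (n : ℝ) * V < n * (n * ε ^ 3) :=
      mul_lt_mul_of_pos_left hnV hnpos
    calc (n : ℝ) * V < n * (n * ε ^ 3) := this
      _ = ε * ((n : ℝ) * ε) ^ 2 := by ring
  have hsplit : ∑ x ∈ T, productProb d n p x = 1 - ∑ x ∈ Tᶜ, productProb d n p x := by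
    have := Finset.sum_add_sum_compl T (productProb d n p)
    rw [hμtotal] at this
    linarith
  rw [hsplit]
  linarith
end

section
/- (Asymptotic Equipartition Property, counting part.) Let d ≥ 1 and p : Fin d → ℝ with p(i) > 0 for all i and ∑ᵢ p(i) = 1; let H = −∑ᵢ p(i)·log₂ p(i). For x ∈ (Fin d)ⁿ let Pₙ(x) = ∏_{j=1}^n p(xⱼ) and Tₙ(ε) = { x : 2^{−n(H+ε)} ≤ Pₙ(x) ≤ 2^{−n(H−ε)} }. Then for every ε > 0: (i) |Tₙ(ε)| ≤ 2^{n(H+ε)} for every n; and (ii) there exists n₀ such that |Tₙ(ε)| ≥ (1 − ε)·2^{n(H−ε)} for all n > n₀. -/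
lemma aux_sum_prod {n d : ℕ} (F : Fin n → Fin d → ℝ) :
    ∑ x : Fin n → Fin d, ∏ j, F j (x j) = ∏ j, ∑ i, F j i :=
  (Fintype.prod_sum F).symm

lemma aux_total {d : ℕ} (p : Fin d → ℝ) (hpsum : ∑ i, p i = 1) (n : ℕ) :
    ∑ x : Fin n → Fin d, ∏ j, p (x j) = 1 := by
  rw [aux_sum_prod fun _ i => p i]
  simp [hpsum]

lemma aux_second_moment {d : ℕ} (p h : Fin d → ℝ) (hpsum : ∑ i, p i = 1)
    (hmean : ∑ i, p i * h i = 0) (n : ℕ) :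
    ∑ x : Fin n → Fin d, (∏ j, p (x j)) * (∑ j, h (x j)) ^ 2
      = n * ∑ i, p i * h i ^ 2 := by
  have key : ∀ j k : Fin n, ∑ x : Fin n → Fin d, (∏ m, p (x m)) * (h (x j) * h (x k))
      = if j = k then ∑ i, p i * h i ^ 2 else 0 := by
    intro j k
    have hprod : ∀ x : Fin n → Fin d, (∏ m, p (x m)) * (h (x j) * h (x k))
        = ∏ m, (p (x m) * ((if m = j then h (x m) else 1) * (if m = k then h (x m) else 1))) := by
      intro x
      rw [Finset.prod_mul_distrib, Finset.prod_mul_distrib,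
        Finset.prod_ite_eq' Finset.univ j (fun m => h (x m)),
        Finset.prod_ite_eq' Finset.univ k (fun m => h (x m))]
      simp
    rw [Finset.sum_congr rfl fun x _ => hprod x,
      aux_sum_prod fun m i => p i * ((if m = j then h i else 1) * (if m = k then h i else 1))]
    by_cases hjk : j = k
    · subst hjk
      simp only [if_pos rfl]
      rw [Finset.prod_eq_single j]
      · simp [sq, mul_assoc]
      · intro m _ hm
        simp [hm, hpsum]
      · simp
    · rw [if_neg hjk]
      apply Finset.prod_eq_zero (Finset.mem_univ j)
      simp [hjk, hmean]
  have expand : ∀ x : Fin n → Fin d, (∏ m, p (x m)) * (∑ j, h (x j)) ^ 2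
      = ∑ j, ∑ k, (∏ m, p (x m)) * (h (x j) * h (x k)) := by
    intro x
    rw [sq, Finset.sum_mul_sum]
    simp [Finset.mul_sum]
  rw [Finset.sum_congr rfl fun x _ => expand x, Finset.sum_comm]
  rw [Finset.sum_congr rfl fun j _ => (Finset.sum_comm : _ = ∑ k, ∑ x : Fin n → Fin d, _)]
  rw [Finset.sum_congr rfl fun j _ => Finset.sum_congr rfl fun k _ => key j k]
  simp [mul_comm]

/-- **Asymptotic Equipartition Property (counting part).**
For a probability vector `p` on `Fin d` with all `p i > 0` and any `ε > 0`:
(i) the `ε`-typical set of strings of length `n` has cardinality at most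
`2^(n(H+ε))` for every `n`; and (ii) for all sufficiently large `n` its
cardinality is at least `(1 - ε) · 2^(n(H-ε))`. -/
theorem aep_counting (d : ℕ) (hd : 1 ≤ d) (p : Fin d → ℝ)
    (hp : ∀ i, 0 < p i) (hpsum : ∑ i, p i = 1)
    (ε : ℝ) (hε : 0 < ε) :
    (∀ n : ℕ, ((typicalSet d n p ε).card : ℝ) ≤
      (2 : ℝ) ^ ((n : ℝ) * (shannonEntropy2 d p + ε))) ∧
    ∃ n₀ : ℕ, ∀ n > n₀,
      (1 - ε) * (2 : ℝ) ^ ((n : ℝ) * (shannonEntropy2 d p - ε)) ≤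
        ((typicalSet d n p ε).card : ℝ) := by
  classical
  set H := shannonEntropy2 d p with hH
  set f : Fin d → ℝ := fun i => -Real.logb 2 (p i) with hf
  have hHf : ∑ i, p i * f i = H := by
    simp [hf, hH, shannonEntropy2, mul_neg]
  set h : Fin d → ℝ := fun i => f i - H with hh
  have hmean : ∑ i, p i * h i = 0 := by
    simp only [hh, mul_sub, Finset.sum_sub_distrib, hHf, ← Finset.sum_mul, hpsum]
    ring
  set σ2 := ∑ i, p i * h i ^ 2 with hσ2
  have hσ2nonneg : 0 ≤ σ2 :=
    Finset.sum_nonneg fun i _ => mul_nonneg (hp i).le (sq_nonneg _)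
  have hPpos : ∀ (n : ℕ) (x : Fin n → Fin d), 0 < productProb d n p x :=
    fun n x => Finset.prod_pos fun j _ => hp _
  have hPeq : ∀ (n : ℕ) (x : Fin n → Fin d),
      productProb d n p x = (2 : ℝ) ^ (-(∑ j, f (x j))) := by
    intro n x
    have : -(∑ j, f (x j)) = ∑ j, Real.logb 2 (p (x j)) := by
      simp [hf]
    rw [productProb, this, Real.rpow_sum_of_pos two_pos]
    exact (Finset.prod_congr rfl fun j _ =>
      Real.rpow_logb two_pos (by norm_num) (hp _)).symm
  have hsumh : ∀ (n : ℕ) (x : Fin n → Fin d),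
      ∑ j, h (x j) = (∑ j, f (x j)) - n * H := by
    intro n x
    simp [hh, Finset.sum_sub_distrib, mul_comm]
  have hmem : ∀ (n : ℕ) (x : Fin n → Fin d),
      x ∈ typicalSet d n p ε ↔ |∑ j, h (x j)| ≤ (n : ℝ) * ε := by
    intro n x
    rw [typicalSet, Finset.mem_filter]
    simp only [Finset.mem_univ, true_and]
    rw [hPeq n x, Real.rpow_le_rpow_left_iff (by norm_num : (1:ℝ) < 2),
      Real.rpow_le_rpow_left_iff (by norm_num : (1:ℝ) < 2), abs_le, hsumh n x]
    constructor
    · rintro ⟨h1, h2⟩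
      constructor <;> nlinarith
    · rintro ⟨h1, h2⟩
      constructor <;> nlinarith
  constructor
  · intro n
    have key : ((typicalSet d n p ε).card : ℝ) * (2 : ℝ) ^ (-(n : ℝ) * (H + ε)) ≤ 1 := by
      calc ((typicalSet d n p ε).card : ℝ) * (2 : ℝ) ^ (-(n : ℝ) * (H + ε))
          = ∑ _x ∈ typicalSet d n p ε, (2 : ℝ) ^ (-(n : ℝ) * (H + ε)) := by
            rw [Finset.sum_const, nsmul_eq_mul]
        _ ≤ ∑ x ∈ typicalSet d n p ε, productProb d n p x := by
            refine Finset.sum_le_sum fun x hx => ?_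
            exact ((Finset.mem_filter.mp hx).2).1
        _ ≤ ∑ x : Fin n → Fin d, productProb d n p x :=
            Finset.sum_le_sum_of_subset_of_nonneg (Finset.subset_univ _)
              (fun x _ _ => (hPpos n x).le)
        _ = 1 := by simpa [productProb] using aux_total p hpsum n
    have hpos : (0 : ℝ) < (2 : ℝ) ^ ((n : ℝ) * (H + ε)) := Real.rpow_pos_of_pos two_pos _
    rw [neg_mul, Real.rpow_neg (by norm_num), ← div_eq_mul_inv, div_le_one hpos] at key
    exact key
  · refine ⟨Nat.ceil (σ2 / ε ^ 3), fun n hn => ?_⟩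
    have hn1 : 0 < n := lt_of_le_of_lt (Nat.zero_le _) hn
    have hnR : (0 : ℝ) < n := Nat.cast_pos.mpr hn1
    have hσn : σ2 ≤ (n : ℝ) * ε ^ 3 := by
      have h1 : σ2 / ε ^ 3 ≤ (n : ℝ) := by
        refine le_trans (Nat.le_ceil _) ?_
        exact_mod_cast le_of_lt hn
      have hε3 : (0 : ℝ) < ε ^ 3 := by positivity
      calc σ2 = σ2 / ε ^ 3 * ε ^ 3 := by field_simp
        _ ≤ (n : ℝ) * ε ^ 3 := by nlinarith
    set T := typicalSet d n p ε with hT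
    have cheb : ((n : ℝ) * ε) ^ 2 * ∑ x ∈ Tᶜ, productProb d n p x ≤ (n : ℝ) * σ2 := by
      calc ((n : ℝ) * ε) ^ 2 * ∑ x ∈ Tᶜ, productProb d n p x
          = ∑ x ∈ Tᶜ, productProb d n p x * ((n : ℝ) * ε) ^ 2 := by
            rw [Finset.mul_sum]; exact Finset.sum_congr rfl fun x _ => mul_comm _ _
        _ ≤ ∑ x ∈ Tᶜ, productProb d n p x * (∑ j, h (x j)) ^ 2 := by
            refine Finset.sum_le_sum fun x hx => ?_
            have hx' : x ∉ T := Finset.mem_compl.mp hx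
            have := (not_iff_not.mpr (hmem n x)).mp hx'
            push_neg at this
            have habs : (n : ℝ) * ε ≤ |∑ j, h (x j)| := this.le
            have : ((n : ℝ) * ε) ^ 2 ≤ (∑ j, h (x j)) ^ 2 := by
              rw [← sq_abs (∑ j, h (x j))]
              exact pow_le_pow_left₀ (by positivity) habs 2
            exact mul_le_mul_of_nonneg_left this (hPpos n x).le
        _ ≤ ∑ x : Fin n → Fin d, productProb d n p x * (∑ j, h (x j)) ^ 2 :=
            Finset.sum_le_sum_of_subset_of_nonneg (Finset.subset_univ _)
              (fun x _ _ => mul_nonneg (hPpos n x).le (sq_nonneg _))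
        _ = (n : ℝ) * σ2 := by
            simpa [productProb] using aux_second_moment p h hpsum hmean n
    have hsplit : (∑ x ∈ T, productProb d n p x) + ∑ x ∈ Tᶜ, productProb d n p x = 1 := by
      rw [Finset.sum_add_sum_compl]
      simpa [productProb] using aux_total p hpsum n
    have hcompl : ∑ x ∈ Tᶜ, productProb d n p x ≤ ε := by
      have h2 : (n : ℝ) * σ2 ≤ ((n : ℝ) * ε) ^ 2 * ε := by nlinarith
      exact le_of_mul_le_mul_left (le_trans cheb h2) (by positivity)
    have hTsum : 1 - ε ≤ ∑ x ∈ T, productProb d n p x := by linarith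
    have hub : ∑ x ∈ T, productProb d n p x
        ≤ (T.card : ℝ) * (2 : ℝ) ^ (-(n : ℝ) * (H - ε)) := by
      calc ∑ x ∈ T, productProb d n p x
          ≤ ∑ _x ∈ T, (2 : ℝ) ^ (-(n : ℝ) * (H - ε)) := by
            refine Finset.sum_le_sum fun x hx => ?_
            exact ((Finset.mem_filter.mp hx).2).2
        _ = (T.card : ℝ) * (2 : ℝ) ^ (-(n : ℝ) * (H - ε)) := by
            rw [Finset.sum_const, nsmul_eq_mul]
    have h3 : 1 - ε ≤ (T.card : ℝ) * (2 : ℝ) ^ (-(n : ℝ) * (H - ε)) := le_trans hTsum hub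
    have hpos : (0 : ℝ) < (2 : ℝ) ^ ((n : ℝ) * (H - ε)) := Real.rpow_pos_of_pos two_pos _
    calc (1 - ε) * (2 : ℝ) ^ ((n : ℝ) * (H - ε))
        ≤ ((T.card : ℝ) * (2 : ℝ) ^ (-(n : ℝ) * (H - ε))) * (2 : ℝ) ^ ((n : ℝ) * (H - ε)) :=
          mul_le_mul_of_nonneg_right h3 hpos.le
      _ = (T.card : ℝ) := by
          rw [mul_assoc, ← Real.rpow_add two_pos]
          simp
end
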